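/- Let n be a positive integer, 0 ≤ p ≤ 1, Y a binomially distributed random variable with parameters n and p, and ℓ a positive integer. Then ‖Y‖_ℓ ≤ A(np, ℓ), where A(x, ℓ) := π e^{e−2}·(ℓ/log(e−1)) if ℓ > x and A(x, ℓ) := π e^{e−2}·x if ℓ ≤ x, and ‖Y‖_ℓ := (E[Y^ℓ])^{1/ℓ}. -/

import Mathlib

/-!
For every `t > 0` the elementary bound `y ^ ℓ ≤ (ℓ / (e t)) ^ ℓ * exp (t y)` reduces the `ℓ`-th
moment of `Y` to its moment generating function `E exp (t Y) = (1 - p + p e^t) ^ n`, which is at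
most `exp (n p (e^t - 1))`; hence `‖Y‖_ℓ ≤ ℓ / (e t) * exp (n p (e^t - 1) / ℓ)`. Take `t = 1` if
`ℓ > n p` and `t = ℓ / (n p) ≤ 1` otherwise: by convexity `e^t - 1 ≤ t (e - 1)` on `[0, 1]`, the
exponent is at most `e - 1`, so the bound is `ℓ e^{e-2}`, resp. `n p e^{e-2}`, and both are at most
`A(n p, ℓ)` because `log (e - 1) ≤ 1 ≤ π`.
-/

open MeasureTheory Real

/-- The constant `A(x, ℓ) = π e^{e−2}·(ℓ/log(e−1))` if `ℓ > x`, and `π e^{e−2}·x` if `ℓ ≤ x`. -/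
noncomputable def Aconst (x : ℝ) (ℓ : ℕ) : ℝ :=
  if x < ℓ then π * Real.exp (Real.exp 1 - 2) * ℓ / Real.log (Real.exp 1 - 1)
  else π * Real.exp (Real.exp 1 - 2) * x

open Finset

theorem MeasureTheory.integral_comp_eq_sum_of_measure_preimage_eq_zero
    {Ω X E : Type*} [MeasurableSpace Ω] [MeasurableSpace X] [MeasurableSingletonClass X]
    [Countable X] [NormedAddCommGroup E] [NormedSpace ℝ E] [CompleteSpace E]
    {P : Measure Ω} [IsFiniteMeasure P] {Y : Ω → X} (hY : Measurable Y) (s : Finset X)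
    (hs : ∀ x ∉ s, P (Y ⁻¹' {x}) = 0) (f : X → E) :
    ∫ ω, f (Y ω) ∂P = ∑ x ∈ s, P.real (Y ⁻¹' {x}) • f x := by
  have hmem : ∀ᵐ x ∂P.map Y, x ∈ s := ae_iff_of_countable.2 fun x hx => by
    by_contra hxs
    exact hx (by rw [Measure.map_apply hY (measurableSet_singleton x)]; exact hs x hxs)
  rw [← integral_map hY.aemeasurable AEStronglyMeasurable.of_discrete,
    ← Measure.restrict_eq_self_of_ae_mem hmem, setIntegral_finset s IntegrableOn.finset]
  refine sum_congr rfl fun x _ => ?_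
  rw [measureReal_def, measureReal_def, Measure.map_apply hY (measurableSet_singleton x)]

noncomputable def binomialWeight (n : ℕ) (p : ℝ) (m : ℕ) : ℝ :=
  n.choose m * p ^ m * (1 - p) ^ (n - m)

lemma binomialWeight_nonneg {p : ℝ} (hp0 : 0 ≤ p) (hp1 : p ≤ 1) (n m : ℕ) :
    0 ≤ binomialWeight n p m :=
  mul_nonneg (by positivity) (pow_nonneg (sub_nonneg.2 hp1) _)

lemma binomialWeight_eq_zero_of_lt {n m : ℕ} (p : ℝ) (h : n < m) : binomialWeight n p m = 0 := by
  simp [binomialWeight, Nat.choose_eq_zero_of_lt h]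

lemma sum_binomialWeight_mul_exp (n : ℕ) (p t : ℝ) :
    ∑ m ∈ range (n + 1), binomialWeight n p m * exp (t * m) = (p * exp t + (1 - p)) ^ n := by
  rw [add_pow]
  refine sum_congr rfl fun m _ => ?_
  rw [binomialWeight, mul_comm t, exp_nat_mul, mul_pow]
  ring

lemma sum_binomialWeight_mul_exp_le {p : ℝ} (hp0 : 0 ≤ p) (hp1 : p ≤ 1) (n : ℕ) (t : ℝ) :
    ∑ m ∈ range (n + 1), binomialWeight n p m * exp (t * m) ≤ exp (n * p * (exp t - 1)) := by
  rw [sum_binomialWeight_mul_exp, mul_assoc, exp_nat_mul]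
  have hbase : 0 ≤ p * exp t + (1 - p) := by have := exp_pos t; nlinarith
  gcongr
  linarith [add_one_le_exp (p * (exp t - 1))]

lemma pow_le_mul_exp (ℓ : ℕ) {t y : ℝ} (ht : 0 < t) (hy : 0 ≤ y) :
    y ^ ℓ ≤ (ℓ / (exp 1 * t)) ^ ℓ * exp (t * y) := by
  rcases Nat.eq_zero_or_pos ℓ with rfl | hℓ
  · simpa using one_le_exp (by positivity)
  set u := t * y / ℓ
  have hu : y ≤ ℓ / (exp 1 * t) * exp u := by
    have h := add_one_le_exp (u - 1)
    rw [exp_sub, sub_add_cancel, le_div_iff₀ (exp_pos 1)] at h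
    rw [div_mul_eq_mul_div, le_div_iff₀ (by positivity)]
    calc y * (exp 1 * t) = ℓ * (u * exp 1) := by simp only [u]; field_simp
      _ ≤ ℓ * exp u := by gcongr
  calc y ^ ℓ ≤ (ℓ / (exp 1 * t) * exp u) ^ ℓ := by gcongr
    _ = (ℓ / (exp 1 * t)) ^ ℓ * exp (t * y) := by
      rw [mul_pow, ← exp_nat_mul, mul_div_cancel₀ _ (by positivity)]

lemma sum_binomialWeight_mul_pow_le {p : ℝ} (hp0 : 0 ≤ p) (hp1 : p ≤ 1) (n ℓ : ℕ) {t : ℝ}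
    (ht : 0 < t) :
    ∑ m ∈ range (n + 1), binomialWeight n p m * (m : ℝ) ^ ℓ ≤
      (ℓ / (exp 1 * t)) ^ ℓ * exp (n * p * (exp t - 1)) :=
  calc ∑ m ∈ range (n + 1), binomialWeight n p m * (m : ℝ) ^ ℓ
      ≤ ∑ m ∈ range (n + 1), binomialWeight n p m * ((ℓ / (exp 1 * t)) ^ ℓ * exp (t * m)) :=
        sum_le_sum fun m _ =>
          mul_le_mul_of_nonneg_left (pow_le_mul_exp ℓ ht m.cast_nonneg)
            (binomialWeight_nonneg hp0 hp1 n m)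
    _ = (ℓ / (exp 1 * t)) ^ ℓ * ∑ m ∈ range (n + 1), binomialWeight n p m * exp (t * m) := by
        rw [mul_sum]; exact sum_congr rfl fun m _ => by ring
    _ ≤ (ℓ / (exp 1 * t)) ^ ℓ * exp (n * p * (exp t - 1)) := by
        gcongr; exact sum_binomialWeight_mul_exp_le hp0 hp1 n t

lemma exp_sub_one_le_mul {t : ℝ} (ht0 : 0 ≤ t) (ht1 : t ≤ 1) : exp t - 1 ≤ t * (exp 1 - 1) := by
  have h := convexOn_exp.2 (Set.mem_univ 0) (Set.mem_univ 1) (sub_nonneg.2 ht1) ht0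
    (sub_add_cancel 1 t)
  simp only [smul_eq_mul, mul_zero, mul_one, zero_add, exp_zero] at h
  linarith

lemma sum_binomialWeight_mul_pow_rpow_inv_le {p : ℝ} (hp0 : 0 ≤ p) (hp1 : p ≤ 1) (n : ℕ)
    {ℓ : ℕ} (hℓ : 0 < ℓ) {t : ℝ} (ht0 : 0 < t) (ht1 : t ≤ 1) (hnpt : n * p * t ≤ ℓ) :
    (∑ m ∈ range (n + 1), binomialWeight n p m * (m : ℝ) ^ ℓ) ^ ((ℓ : ℝ)⁻¹) ≤
      ℓ / t * exp (exp 1 - 2) := by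
  have hsum_nonneg : 0 ≤ ∑ m ∈ range (n + 1), binomialWeight n p m * (m : ℝ) ^ ℓ :=
    sum_nonneg fun m _ => mul_nonneg (binomialWeight_nonneg hp0 hp1 n m) (by positivity)
  have hexponent : n * p * (exp t - 1) ≤ ℓ * (exp 1 - 1) :=
    calc n * p * (exp t - 1) ≤ n * p * (t * (exp 1 - 1)) := by
          gcongr; exact exp_sub_one_le_mul ht0.le ht1
      _ = n * p * t * (exp 1 - 1) := by ring
      _ ≤ ℓ * (exp 1 - 1) := by gcongr; linarith [add_one_le_exp 1]
  rw [rpow_inv_le_iff_of_pos hsum_nonneg (by positivity) (by positivity), rpow_natCast]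
  calc ∑ m ∈ range (n + 1), binomialWeight n p m * (m : ℝ) ^ ℓ
      ≤ (ℓ / (exp 1 * t)) ^ ℓ * exp (n * p * (exp t - 1)) :=
        sum_binomialWeight_mul_pow_le hp0 hp1 n ℓ ht0
    _ ≤ (ℓ / (exp 1 * t)) ^ ℓ * exp (ℓ * (exp 1 - 1)) := by gcongr
    _ = (ℓ / t * exp (exp 1 - 2)) ^ ℓ := by
        rw [exp_nat_mul, ← mul_pow, show exp 1 - 1 = (exp 1 - 2) + 1 by ring, exp_add]
        field_simp

lemma integral_pow_eq_sum_binomialWeight {Ω : Type*} [MeasurableSpace Ω] {P : Measure Ω}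
    [IsFiniteMeasure P] {n : ℕ} {p : ℝ} (hp0 : 0 ≤ p) (hp1 : p ≤ 1) {Y : Ω → ℕ}
    (hYm : Measurable Y) (hbin : ∀ m : ℕ, P {ω | Y ω = m} = ENNReal.ofReal (binomialWeight n p m))
    (ℓ : ℕ) :
    ∫ ω, (Y ω : ℝ) ^ ℓ ∂P = ∑ m ∈ range (n + 1), binomialWeight n p m * (m : ℝ) ^ ℓ := by
  have hpreimage (m : ℕ) : P (Y ⁻¹' {m}) = ENNReal.ofReal (binomialWeight n p m) := hbin m
  rw [integral_comp_eq_sum_of_measure_preimage_eq_zero hYm (range (n + 1)) (fun m hm => ?_)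
    (fun m : ℕ => (m : ℝ) ^ ℓ)]
  · refine sum_congr rfl fun m _ => ?_
    rw [measureReal_def, hpreimage, ENNReal.toReal_ofReal (binomialWeight_nonneg hp0 hp1 n m),
      smul_eq_mul]
  · rw [hpreimage, binomialWeight_eq_zero_of_lt p (by simpa using hm), ENNReal.ofReal_zero]

lemma log_exp_one_sub_one_le_one : log (exp 1 - 1) ≤ 1 := by
  have := log_le_sub_one_of_pos (show 0 < exp 1 - 1 by linarith [add_one_le_exp 1])
  linarith [exp_one_lt_d9]

theorem stmt_18_general {Ω : Type*} [MeasurableSpace Ω] (P : Measure Ω) [IsProbabilityMeasure P]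
    (n : ℕ) (p : ℝ) (hp0 : 0 ≤ p) (hp1 : p ≤ 1)
    (Y : Ω → ℕ) (hYm : Measurable Y)
    (hbin : ∀ m : ℕ,
      P {ω | Y ω = m} = ENNReal.ofReal ((n.choose m : ℝ) * p ^ m * (1 - p) ^ (n - m)))
    (ℓ : ℕ) (hℓ : 1 ≤ ℓ) :
    (∫ ω, (Y ω : ℝ) ^ ℓ ∂P) ^ ((ℓ : ℝ)⁻¹) ≤ Aconst (n * p) ℓ := by
  rw [integral_pow_eq_sum_binomialWeight hp0 hp1 hYm hbin]
  unfold Aconst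
  split_ifs with hcase
  · have hlog_pos : 0 < log (exp 1 - 1) := log_pos (by linarith [exp_one_gt_d9])
    calc _ ≤ ℓ / 1 * exp (exp 1 - 2) :=
          sum_binomialWeight_mul_pow_rpow_inv_le hp0 hp1 n hℓ one_pos le_rfl (by linarith)
      _ ≤ π * exp (exp 1 - 2) * ℓ / log (exp 1 - 1) := by
          rw [le_div_iff₀ hlog_pos, div_one]
          calc ℓ * exp (exp 1 - 2) * log (exp 1 - 1) ≤ ℓ * exp (exp 1 - 2) * π := by
                gcongr; linarith [log_exp_one_sub_one_le_one, pi_gt_three]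
            _ = π * exp (exp 1 - 2) * ℓ := by ring
  · have hnp : 0 < n * p := (Nat.cast_pos.2 hℓ).trans_le (not_lt.1 hcase)
    have hℓ0 : (ℓ : ℝ) ≠ 0 := by positivity
    calc _ ≤ ℓ / (ℓ / (n * p)) * exp (exp 1 - 2) :=
          sum_binomialWeight_mul_pow_rpow_inv_le hp0 hp1 n hℓ (by positivity)
            ((div_le_one hnp).2 (by linarith)) (by rw [mul_div_cancel₀ _ hnp.ne'])
      _ = 1 * (exp (exp 1 - 2) * (n * p)) := by rw [div_div_cancel₀ hℓ0]; ring
      _ ≤ π * exp (exp 1 - 2) * (n * p) := by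
          rw [mul_assoc]; gcongr; linarith [pi_gt_three]

/-- **Lemma (binomial moment bound)**: if `Y ~ Binomial(n, p)` then `‖Y‖_ℓ ≤ A(np, ℓ)`. -/
theorem stmt_18 {Ω : Type*} [MeasurableSpace Ω] (P : Measure Ω) [IsProbabilityMeasure P]
    (n : ℕ) (hn : 1 ≤ n) (p : ℝ) (hp0 : 0 ≤ p) (hp1 : p ≤ 1)
    (Y : Ω → ℕ) (hYm : Measurable Y)
    (hbin : ∀ m : ℕ,
      P {ω | Y ω = m} = ENNReal.ofReal ((n.choose m : ℝ) * p ^ m * (1 - p) ^ (n - m)))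
    (ℓ : ℕ) (hℓ : 1 ≤ ℓ) :
    (∫ ω, (Y ω : ℝ) ^ ℓ ∂P) ^ ((ℓ : ℝ)⁻¹) ≤ Aconst (n * p) ℓ :=
  stmt_18_general P n p hp0 hp1 Y hYm hbin ℓ hℓ
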